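/- arXiv:1601.06014 — 4 statements merged into one kernel-verified Lean document; each statement's English description precedes it below -/
import Mathlib

section
/- Let (X_i)_{i∈ℤ} be a stationary ergodic process over a finite alphabet 𝕏 with entropy rate h. For any ε > 0 and any sequence of sample sizes with 1 ≤ n(k) ≤ 2^{k(h−ε)} and n(k) ≥ k, almost surely limsup_{k→∞} H(k, X_1^{n(k)})/k ≤ h − ε; hence the sample size n(k) ≤ 2^{k(h−ε)} is insufficient for consistent estimation of the entropy rate by the plug-in estimator. -/
set_option linter.unusedSectionVars false

open MeasureTheory Filter Real

variable {𝕏 : Type*} [Fintype 𝕏] [Nonempty 𝕏] [DecidableEq 𝕏]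
  [MeasurableSpace 𝕏] [MeasurableSingletonClass 𝕏]

/-- The left shift on two-sided sequences: `(shift ω) i = ω (i + 1)`. -/
def shift (ω : ℤ → 𝕏) : ℤ → 𝕏 := fun i => ω (i + 1)

/-- The block `X_{s+1}^{s+l}` of a sequence `ω`, as a tuple in `𝕏^l`. -/
def blk (s l : ℕ) (ω : ℤ → 𝕏) : Fin l → 𝕏 := fun i => ω ((s : ℤ) + 1 + (i : ℤ))

/-- Shannon entropy (base 2) of a distribution `p` on a finite set:
`H(p) = -∑_{w : p w > 0} p w * log₂ (p w)` (`logb 2 0 = 0`, so zero-mass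
points contribute nothing). -/
noncomputable def Hent {A : Type*} [Fintype A] (p : A → ℝ) : ℝ :=
  -∑ w, p w * Real.logb 2 (p w)

/-- Empirical nonoverlapping-block distribution
`p_k(w, x_1^n) = ⌊n/k⌋⁻¹ ∑_{i=1}^{⌊n/k⌋} 1[x_{(i-1)k+1}^{ik} = w]`. -/
noncomputable def empDist (k n : ℕ) (ω : ℤ → 𝕏) : (Fin k → 𝕏) → ℝ :=
  fun w => (∑ i ∈ Finset.range (n / k), if blk (i * k) k ω = w then (1 : ℝ) else 0) / (n / k : ℕ)

/-- Plug-in estimator `H(k, x_1^n)` of the block entropy. -/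
noncomputable def plugIn (k n : ℕ) (ω : ℤ → 𝕏) : ℝ := Hent (empDist k n ω)

/-- True block distribution `p_k(w) = P(X_1^k = w)`. -/
noncomputable def pblock (μ : Measure (ℤ → 𝕏)) (k : ℕ) : (Fin k → 𝕏) → ℝ :=
  fun w => (μ {ω | blk 0 k ω = w}).toReal

/-- Block entropy `H(k) = H(p_k)`. -/
noncomputable def Hblock (μ : Measure (ℤ → 𝕏)) (k : ℕ) : ℝ := Hent (pblock μ k)

/-- Number `D(k, x_1^n)` of distinct nonoverlapping `k`-blocks in `x_1^n`. -/
noncomputable def Dcount (k n : ℕ) (ω : ℤ → 𝕏) : ℕ :=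
  Set.ncard {w : Fin k → 𝕏 | ∃ i < n / k, blk (i * k) k ω = w}

/-- Length bound `K(k, x_1^n)` of the modified `k`-block code:
`K(k,x_1^n) = 2 log₂ k + (n/k)(H(k,x_1^n) + 2) + 3 k log₂|𝕏| (D(k,x_1^n) + 1)`. -/
noncomputable def Kcode (k n : ℕ) (ω : ℤ → 𝕏) : ℝ :=
  2 * Real.logb 2 k + ((n : ℝ) / k) * (plugIn k n ω + 2)
    + 3 * k * Real.logb 2 (Fintype.card 𝕏) * (Dcount k n ω + 1)

/-- Conditional probability `P(X_1^k = w | ℐ)` given the shift-invariant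
σ-algebra `ℐ`, as a function of the sample point. -/
noncomputable def condP (μ : Measure (ℤ → 𝕏)) (k : ℕ) (w : Fin k → 𝕏) : (ℤ → 𝕏) → ℝ :=
  μ[Set.indicator {ω | blk 0 k ω = w} (fun _ => (1 : ℝ)) | MeasurableSpace.invariants shift]

/-- Conditional block entropy `H(X_1^k | ℐ) = E[-log₂ P(X_1^k = w | ℐ)|_{w = X_1^k}]`. -/
noncomputable def condH (μ : Measure (ℤ → 𝕏)) (k : ℕ) : ℝ :=
  ∫ ω, -Real.logb 2 (condP μ k (blk 0 k ω) ω) ∂μ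

/-- `σ(y) = min(2^y, 1)`. -/
noncomputable def sigmaFn (y : ℝ) : ℝ := min ((2 : ℝ) ^ y) 1

/-- Negative part `x⁻ = -x · 1[x < 0]`. -/
noncomputable def nPart (x : ℝ) : ℝ := if x < 0 then -x else 0

/-! The bound holds for every sample path. The empirical distribution of the `⌊n/k⌋`
nonoverlapping blocks puts mass at least `1/⌊n/k⌋` on each block it charges, so its entropy
is at most `log₂ ⌊n/k⌋ ≤ log₂ n ≤ k (h - ε)`. -/

open Finset

lemma Hent_nonneg {A : Type*} [Fintype A] {p : A → ℝ} (h0 : ∀ w, 0 ≤ p w)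
    (h1 : ∀ w, p w ≤ 1) : 0 ≤ Hent p :=
  neg_nonneg.2 <| sum_nonpos fun w _ =>
    mul_nonpos_of_nonneg_of_nonpos (h0 w) (Real.logb_nonpos one_lt_two (h0 w) (h1 w))

lemma Hent_le_logb {A : Type*} [Fintype A] {p : A → ℝ} {M : ℝ} (hM : 0 < M)
    (hsum : ∑ w, p w = 1) (h0 : ∀ w, 0 ≤ p w) (hge : ∀ w, p w ≠ 0 → M⁻¹ ≤ p w) :
    Hent p ≤ Real.logb 2 M := by
  have term_le : ∀ w, -(p w * Real.logb 2 (p w)) ≤ p w * Real.logb 2 M := by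
    intro w
    rcases (h0 w).eq_or_lt with hz | hp
    · simp [← hz]
    have hlog : Real.logb 2 M⁻¹ ≤ Real.logb 2 (p w) :=
      Real.logb_le_logb_of_le one_lt_two (inv_pos.2 hM) (hge w hp.ne')
    rw [Real.logb_inv] at hlog
    rw [← mul_neg]
    exact mul_le_mul_of_nonneg_left (by linarith) hp.le
  calc Hent p = ∑ w, -(p w * Real.logb 2 (p w)) := by rw [Hent, sum_neg_distrib]
    _ ≤ ∑ w, p w * Real.logb 2 M := sum_le_sum fun w _ => term_le w
    _ = Real.logb 2 M := by rw [← sum_mul, hsum, one_mul]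

section Empirical

variable {α : Type*} [DecidableEq α] (k n : ℕ) (ω : ℤ → α)

lemma empDist_eq_card_div (w : Fin k → α) :
    empDist k n ω w = #{i ∈ range (n / k) | blk (i * k) k ω = w} / (n / k : ℕ) := by
  simp only [empDist, sum_boole]

lemma empDist_nonneg (w : Fin k → α) : 0 ≤ empDist k n ω w := by
  rw [empDist_eq_card_div]
  positivity

lemma empDist_le_one (w : Fin k → α) : empDist k n ω w ≤ 1 := by
  rw [empDist_eq_card_div]
  refine div_le_one_of_le₀ ?_ (Nat.cast_nonneg _)
  exact_mod_cast (card_filter_le _ _).trans (card_range _).le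

lemma inv_le_empDist {w : Fin k → α} (hw : empDist k n ω w ≠ 0) :
    ((n / k : ℕ) : ℝ)⁻¹ ≤ empDist k n ω w := by
  rw [empDist_eq_card_div] at hw ⊢
  have hcard : (1 : ℝ) ≤ #{i ∈ range (n / k) | blk (i * k) k ω = w} := by
    exact_mod_cast Nat.one_le_iff_ne_zero.2 fun h0 => hw (by simp [h0])
  rw [inv_eq_one_div]
  gcongr

lemma sum_empDist [Fintype α] (hM : 0 < n / k) : ∑ w, empDist k n ω w = 1 := by
  have hfiber : #(range (n / k)) = ∑ w, #{i ∈ range (n / k) | blk (i * k) k ω = w} :=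
    card_eq_sum_card_fiberwise fun _ _ => mem_univ _
  simp_rw [empDist_eq_card_div, ← sum_div]
  rw [← Nat.cast_sum, ← hfiber, card_range, div_self (by positivity)]

lemma plugIn_nonneg [Fintype α] : 0 ≤ plugIn k n ω :=
  Hent_nonneg (empDist_nonneg k n ω) (empDist_le_one k n ω)

lemma plugIn_le_logb_card_blocks [Fintype α] (hM : 0 < n / k) :
    plugIn k n ω ≤ Real.logb 2 (n / k : ℕ) :=
  Hent_le_logb (by exact_mod_cast hM) (sum_empDist k n ω hM) (empDist_nonneg k n ω)
    fun _ => inv_le_empDist k n ω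

lemma plugIn_div_le_of_le_rpow [Fintype α] {c : ℝ} (hk : 0 < k) (hkn : k ≤ n)
    (hn : (n : ℝ) ≤ 2 ^ ((k : ℝ) * c)) : plugIn k n ω / k ≤ c := by
  have hM : 0 < n / k := Nat.div_pos hkn hk
  rw [div_le_iff₀ (by positivity), mul_comm]
  calc plugIn k n ω ≤ Real.logb 2 (n / k : ℕ) := plugIn_le_logb_card_blocks k n ω hM
    _ ≤ Real.logb 2 n := Real.logb_le_logb_of_le one_lt_two (by positivity)
          (by exact_mod_cast Nat.div_le_self n k)
    _ ≤ Real.logb 2 (2 ^ ((k : ℝ) * c)) := Real.logb_le_logb_of_le one_lt_two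
          (by norm_cast; omega) hn
    _ = k * c := Real.logb_rpow two_pos (by norm_num)

end Empirical

theorem plugIn_rate_limsup_le_of_short_sample_general
    {μ : Measure (ℤ → 𝕏)}
    (h : ℝ)
    (ε : ℝ) (n : ℕ → ℕ)
    (hnk : ∀ k, k ≤ n k)
    (hn : ∀ k, (n k : ℝ) ≤ (2 : ℝ) ^ ((k : ℝ) * (h - ε))) :
    ∀ᵐ ω ∂μ,
      Filter.limsup (fun k => plugIn k (n k) ω / k) atTop ≤ h - ε := by
  refine ae_of_all μ fun ω => limsup_le_of_le ?_ ?_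
  · exact isCoboundedUnder_le_of_le atTop fun k => div_nonneg (plugIn_nonneg _ _ ω) k.cast_nonneg
  · filter_upwards [eventually_gt_atTop 0] with k hk
    exact plugIn_div_le_of_le_rpow k (n k) ω hk (hnk k) (hn k)

/-- Too-short samples fail: for a stationary ergodic process with entropy rate
`h`, any `ε > 0` and sample sizes with `1 ≤ n(k) ≤ 2^{k(h−ε)}` and `n(k) ≥ k`,
almost surely `limsup_{k→∞} H(k, X_1^{n(k)})/k ≤ h − ε`. -/
theorem plugIn_rate_limsup_le_of_short_sample
    {μ : Measure (ℤ → 𝕏)} [IsProbabilityMeasure μ]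
    (herg : Ergodic shift μ) (h : ℝ)
    (hrate : Tendsto (fun k => Hblock μ k / k) atTop (nhds h))
    (ε : ℝ) (hε : 0 < ε) (n : ℕ → ℕ)
    (hn1 : ∀ k, 1 ≤ n k) (hnk : ∀ k, k ≤ n k)
    (hn : ∀ k, (n k : ℝ) ≤ (2 : ℝ) ^ ((k : ℝ) * (h - ε))) :
    ∀ᵐ ω ∂μ,
      Filter.limsup (fun k => plugIn k (n k) ω / k) atTop ≤ h - ε :=
  plugIn_rate_limsup_le_of_short_sample_general h ε n hnk hn
end

section
/- For every stationary process (X_i)_{i∈ℤ} over a finite alphabet 𝕏 and all positive integers k ≤ n, the modified k-block code length bound satisfies the source coding inequality E[K(k, X_1^n)] ≥ H(X_1^n), where H(X_1^n) is the Shannon entropy of the block X_1^n. -/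
open MeasureTheory Filter Real

variable {𝕏 : Type*} [Fintype 𝕏] [Nonempty 𝕏] [DecidableEq 𝕏]
  [MeasurableSpace 𝕏] [MeasurableSingletonClass 𝕏]

/-!
Since `K(k, X_1^n)` is a function of the word `X_1^n`, Gibbs' inequality reduces the claim to
Kraft's inequality `∑_y 2^{-K(k, y)} ≤ 1` over the words `y` of length `n`.

Split `y` into `m = ⌊n/k⌋` blocks and a tail of `n mod k < k` letters. As `m ≤ n/k`, the term
`(n/k) H(k, y)` makes `2^{-K}` at most the empirical likelihood `∏ p̂(block)` of the blocks, and
these likelihoods sum to at most `1` over each type class. What is left, `4^{-m} r^{D+1}` with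
`r = |𝕏|^{-3k}`, is summed over all types by a generating function, giving
`r (1 + r/3)^{|𝕏|^k}`; this absorbs the `|𝕏|^{n mod k} ≤ |𝕏|^k` tails as soon as `|𝕏| ≥ 2`.
For `|𝕏| = 1` there is a single word, and `K ≥ 0`.
-/

open Finset

lemma mul_logb_sub_mul_logb_le {p q : ℝ} (hp : 0 ≤ p) (hq : 0 < q) :
    p * Real.logb 2 q - p * Real.logb 2 p ≤ (q - p) / Real.log 2 := by
  rcases hp.eq_or_lt with rfl | hp
  · simp only [zero_mul, sub_zero]
    positivity
  have hlog : Real.log (q / p) ≤ q / p - 1 := Real.log_le_sub_one_of_pos (div_pos hq hp)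
  rw [Real.log_div hq.ne' hp.ne'] at hlog
  have : p * (Real.log q - Real.log p) ≤ q - p :=
    calc p * (Real.log q - Real.log p) ≤ p * (q / p - 1) := by gcongr
      _ = q - p := by field_simp
  simp only [Real.logb, ← mul_div_assoc, ← sub_div, ← mul_sub]
  gcongr

lemma Hent_le_sum_mul_of_kraft {A : Type*} [Fintype A] {p L : A → ℝ} (hp0 : ∀ x, 0 ≤ p x)
    (hp1 : ∑ x, p x = 1) (hL : ∑ x, (2 : ℝ) ^ (-L x) ≤ 1) :
    Hent p ≤ ∑ x, p x * L x := by
  have hpt (x : A) :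
      -(p x * Real.logb 2 (p x)) - p x * L x ≤ ((2 : ℝ) ^ (-L x) - p x) / Real.log 2 := by
    have := mul_logb_sub_mul_logb_le (hp0 x) (Real.rpow_pos_of_pos two_pos (-L x))
    rw [Real.logb_rpow two_pos (by norm_num)] at this
    linarith
  have hsum : Hent p - ∑ x, p x * L x ≤ ((∑ x, (2 : ℝ) ^ (-L x)) - ∑ x, p x) / Real.log 2 := by
    rw [Hent, ← sum_neg_distrib, ← sum_sub_distrib, ← sum_sub_distrib, sum_div]
    exact sum_le_sum fun x _ => hpt x
  have : ((∑ x, (2 : ℝ) ^ (-L x)) - ∑ x, p x) / Real.log 2 ≤ 0 :=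
    div_nonpos_of_nonpos_of_nonneg (by linarith) (Real.log_pos one_lt_two).le
  linarith

lemma logb_two_natCast_nonneg (j : ℕ) : 0 ≤ Real.logb 2 j :=
  div_nonneg (Real.log_natCast_nonneg j) (Real.log_nonneg one_le_two)

lemma sum_prod_le_one {W : Type*} [Fintype W] {m : ℕ} {f : W → ℝ} (hf0 : ∀ w, 0 ≤ f w)
    (hf1 : ∑ w, f w ≤ 1) :
    ∑ β : Fin m → W, ∏ i, f (β i) ≤ 1 := by
  rw [← Fintype.sum_pow]
  exact pow_le_one₀ (sum_nonneg fun w _ => hf0 w) hf1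

lemma integral_comp_eq_sum_measureReal_preimage {Ω β : Type*} [MeasurableSpace Ω] [Fintype β]
    [MeasurableSpace β] [MeasurableSingletonClass β] {μ : Measure Ω} [IsFiniteMeasure μ]
    {X : Ω → β} (hX : Measurable X) (f : β → ℝ) :
    ∫ ω, f (X ω) ∂μ = ∑ b, μ.real (X ⁻¹' {b}) * f b := by
  rw [← integral_map hX.aemeasurable (measurable_of_finite f).aestronglyMeasurable,
    integral_fintype .of_finite]
  simp only [smul_eq_mul, map_measureReal_apply hX (measurableSet_singleton _)]

lemma inv_pow_three_mul_mul_one_add_pow_le_one {t : ℕ} (ht : 2 ≤ t) :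
    ((t : ℝ) ^ 3)⁻¹ * (t * (1 + ((t : ℝ) ^ 3)⁻¹ / 3) ^ t) ≤ 1 := by
  have ht' : (2 : ℝ) ≤ t := by exact_mod_cast ht
  have hexp : (1 + ((t : ℝ) ^ 3)⁻¹ / 3) ^ t ≤ 3 :=
    calc (1 + ((t : ℝ) ^ 3)⁻¹ / 3) ^ t ≤ Real.exp (((t : ℝ) ^ 3)⁻¹ / 3) ^ t := by
          gcongr
          linarith [Real.add_one_le_exp (((t : ℝ) ^ 3)⁻¹ / 3)]
      _ = Real.exp (t * (((t : ℝ) ^ 3)⁻¹ / 3)) := (Real.exp_nat_mul _ t).symm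
      _ ≤ Real.exp 1 := by
          gcongr
          rw [show (t : ℝ) * (((t : ℝ) ^ 3)⁻¹ / 3) = ((t : ℝ) ^ 2)⁻¹ / 3 by field_simp]
          have : ((t : ℝ) ^ 2)⁻¹ ≤ 1 := inv_le_one_of_one_le₀ (by nlinarith)
          linarith
      _ ≤ 3 := by linarith [Real.exp_one_lt_d9]
  calc ((t : ℝ) ^ 3)⁻¹ * (t * (1 + ((t : ℝ) ^ 3)⁻¹ / 3) ^ t)
      = ((t : ℝ) ^ 2)⁻¹ * (1 + ((t : ℝ) ^ 3)⁻¹ / 3) ^ t := by field_simp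
    _ ≤ (1 / 4) * 3 := by
        gcongr
        rw [inv_le_comm₀ (by positivity) (by norm_num)]
        nlinarith
    _ ≤ 1 := by norm_num

namespace BlockCode

noncomputable def typeWeight (r : ℝ) (j : ℕ) : ℝ := (if j = 0 then 1 else r) * (1 / 4) ^ j

lemma typeWeight_nonneg {r : ℝ} (hr : 0 ≤ r) (j : ℕ) : 0 ≤ typeWeight r j := by
  unfold typeWeight; split_ifs <;> positivity

lemma sum_range_typeWeight_le {r : ℝ} (hr : 0 ≤ r) (m : ℕ) :
    ∑ j ∈ range (m + 1), typeWeight r j ≤ 1 + r / 3 := by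
  have hgeom : ∑ j ∈ range m, (1 / 4 : ℝ) ^ j ≤ 4 / 3 := by
    rw [geom_sum_eq (by norm_num)]
    have : (0 : ℝ) ≤ (1 / 4) ^ m := by positivity
    linarith [show ((1 / 4 : ℝ) ^ m - 1) / (1 / 4 - 1) = 4 / 3 - 4 / 3 * (1 / 4) ^ m by ring]
  rw [sum_range_succ']
  simp only [typeWeight, Nat.succ_ne_zero, if_false, if_true, pow_succ, pow_zero, mul_one]
  rw [← mul_sum, ← sum_mul]
  nlinarith

section Types

variable {W : Type*} [DecidableEq W] {m : ℕ}

def count (β : Fin m → W) (w : W) : ℕ := #{i | β i = w}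

/-- For `m = 0` this is identically `0`, like `empDist` when `n < k`. -/
noncomputable def empirical (β : Fin m → W) (w : W) : ℝ := count β w / m

def distinct (β : Fin m → W) : ℕ := #(univ.image β)

lemma count_le (β : Fin m → W) (w : W) : count β w ≤ m :=
  card_filter_le _ _ |>.trans_eq (card_fin m)

lemma empirical_nonneg (β : Fin m → W) (w : W) : 0 ≤ empirical β w := by
  unfold empirical; positivity

lemma empirical_le_one (β : Fin m → W) (w : W) : empirical β w ≤ 1 :=
  div_le_one_of_le₀ (by exact_mod_cast count_le β w) m.cast_nonneg

variable [Fintype W]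

lemma sum_count (β : Fin m → W) : ∑ w, count β w = m :=
  (card_eq_sum_card_fiberwise fun _ _ => mem_univ _).symm.trans (card_fin m)

lemma sum_empirical_le_one (β : Fin m → W) : ∑ w, empirical β w ≤ 1 := by
  simp only [empirical, ← sum_div, ← Nat.cast_sum, sum_count]
  exact div_self_le_one _

lemma prod_empirical_eq (β : Fin m → W) :
    ∏ i, empirical β (β i) = ∏ w, empirical β w ^ count β w := by
  rw [← prod_fiberwise' univ β]
  exact prod_congr rfl fun w _ => prod_const _

lemma rpow_neg_mul_Hent_empirical (β : Fin m → W) :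
    (2 : ℝ) ^ (-(m * Hent (empirical β))) = ∏ i, empirical β (β i) := by
  have hterm (w : W) : m * (empirical β w * Real.logb 2 (empirical β w))
      = count β w * Real.logb 2 (empirical β w) := by
    rcases m.eq_zero_or_pos with rfl | hm
    · simp [Nat.le_zero.mp (count_le β w)]
    · rw [← mul_assoc, empirical, mul_div_cancel₀ _ (by positivity)]
  have hpow (w : W) :
      (2 : ℝ) ^ (count β w * Real.logb 2 (empirical β w)) = empirical β w ^ count β w := by
    rcases (count β w).eq_zero_or_pos with h | h
    · simp [h]
    · have : 0 < empirical β w :=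
        div_pos (by exact_mod_cast h) (by exact_mod_cast h.trans_le (count_le β w))
      rw [mul_comm, Real.rpow_mul_natCast zero_le_two, Real.rpow_logb two_pos (by norm_num) this]
  rw [Hent, mul_neg, neg_neg, mul_sum, prod_empirical_eq]
  simp only [hterm, Real.rpow_sum_of_pos two_pos, hpow]

/-- Within a type class the empirical likelihoods are the probabilities of an i.i.d. sequence
with one-block law `empirical β₀`, so they sum to at most `1`. -/
lemma sum_rpow_neg_mul_Hent_mul_le (g : (W → ℕ) → ℝ) (hg : ∀ c, 0 ≤ g c) :
    ∑ β : Fin m → W, (2 : ℝ) ^ (-(m * Hent (empirical β))) * g (count β)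
      ≤ ∑ c ∈ univ.image (count (W := W) (m := m)), g c := by
  rw [← sum_fiberwise_of_maps_to (t := univ.image (count (m := m))) (g := count)
    fun β _ => mem_image_of_mem _ (mem_univ β)]
  refine sum_le_sum fun c hc => ?_
  obtain ⟨β₀, -, rfl⟩ := mem_image.mp hc
  have hfiber : ∀ β ∈ univ.filter (fun β : Fin m → W => count β = count β₀),
      (2 : ℝ) ^ (-(m * Hent (empirical β))) * g (count β)
        = (∏ i, empirical β₀ (β i)) * g (count β₀) := fun β hβ => by
    have hc : count β = count β₀ := (mem_filter.mp hβ).2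
    have he : empirical β = empirical β₀ := funext fun w => by simp only [empirical, hc]
    rw [rpow_neg_mul_Hent_empirical, he, hc]
  rw [sum_congr rfl hfiber, ← sum_mul]
  refine mul_le_of_le_one_left (hg _) ?_
  refine (sum_le_sum_of_subset_of_nonneg (subset_univ _) fun β _ _ =>
    prod_nonneg fun i _ => empirical_nonneg β₀ (β i)).trans ?_
  exact sum_prod_le_one (empirical_nonneg β₀) (sum_empirical_le_one β₀)

lemma prod_typeWeight_count (r : ℝ) (β : Fin m → W) :
    ∏ w, typeWeight r (count β w) = r ^ distinct β * (1 / 4) ^ m := by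
  have hdistinct : distinct β = #{w | count β w ≠ 0} := by
    show #(univ.image β) = _
    congr 1
    ext w
    simp [count]
  simp only [typeWeight]
  rw [prod_mul_distrib, prod_pow_eq_pow_sum, sum_count, prod_ite, prod_const_one, one_mul,
    prod_const, hdistinct]

lemma sum_image_count_prod_typeWeight_le {r : ℝ} (hr : 0 ≤ r) :
    ∑ c ∈ univ.image (count (W := W) (m := m)), ∏ w, typeWeight r (c w)
      ≤ (1 + r / 3) ^ Fintype.card W :=
  calc ∑ c ∈ univ.image (count (W := W) (m := m)), ∏ w, typeWeight r (c w)
      ≤ ∑ c ∈ Fintype.piFinset fun _ : W => range (m + 1), ∏ w, typeWeight r (c w) := by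
        refine sum_le_sum_of_subset_of_nonneg ?_ fun c _ _ =>
          prod_nonneg fun w _ => typeWeight_nonneg hr _
        intro c hc
        obtain ⟨β, -, rfl⟩ := mem_image.mp hc
        exact Fintype.mem_piFinset.mpr fun w => mem_range_succ_iff.mpr (count_le β w)
    _ = ∏ _w : W, ∑ j ∈ range (m + 1), typeWeight r j := (prod_univ_sum _ _).symm
    _ ≤ (1 + r / 3) ^ Fintype.card W := by
        rw [← card_univ, ← prod_const]
        exact prod_le_prod (fun w _ => sum_nonneg fun j _ => typeWeight_nonneg hr j)
          fun w _ => sum_range_typeWeight_le hr m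

lemma sum_rpow_neg_mul_Hent_mul_pow_distinct_le {r : ℝ} (hr : 0 ≤ r) :
    ∑ β : Fin m → W, (2 : ℝ) ^ (-(m * Hent (empirical β))) * (r ^ distinct β * (1 / 4) ^ m)
      ≤ (1 + r / 3) ^ Fintype.card W := by
  simp only [← prod_typeWeight_count]
  exact (sum_rpow_neg_mul_Hent_mul_le (fun c => ∏ w, typeWeight r (c w))
    fun c => prod_nonneg fun w _ => typeWeight_nonneg hr _).trans
      (sum_image_count_prod_typeWeight_le hr)

end Types

section Words

variable {α : Type*} {k n : ℕ}

lemma mul_add_lt_of_lt_div {i j : ℕ} (hi : i < n / k) (hj : j < k) : i * k + j < n := by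
  have : (i + 1) * k ≤ n / k * k := Nat.mul_le_mul_right k hi
  have := Nat.div_mul_le_self n k
  rw [add_mul, one_mul] at *
  omega

def wordBlocks (k n : ℕ) (y : Fin n → α) : Fin (n / k) → Fin k → α :=
  fun i j => y ⟨i * k + j, mul_add_lt_of_lt_div i.2 j.2⟩

def wordTail (k n : ℕ) (y : Fin n → α) : Fin (n % k) → α :=
  fun j => y ⟨n / k * k + j, by have := Nat.div_add_mod' n k; omega⟩

lemma injective_wordBlocks_wordTail :
    Function.Injective fun y : Fin n → α => (wordBlocks k n y, wordTail k n y) := by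
  intro y y' h
  obtain ⟨hblocks, htail⟩ := Prod.mk.inj h
  have hsplit := Nat.div_add_mod' n k
  funext t
  by_cases ht : (t : ℕ) < n / k * k
  · have hk : 0 < k := Nat.pos_of_ne_zero fun h0 => by simp [h0] at ht
    have hi : (t : ℕ) / k < n / k := (Nat.div_lt_iff_lt_mul hk).mpr ht
    have := congrFun (congrFun hblocks ⟨(t : ℕ) / k, hi⟩) ⟨(t : ℕ) % k, Nat.mod_lt _ hk⟩
    simpa only [wordBlocks, Nat.div_add_mod'] using this
  · have := congrFun htail ⟨t - n / k * k, by omega⟩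
    simp only [wordTail] at this
    convert this using 3 <;> omega

lemma sum_comp_wordBlocks_le [Fintype α] {g : (Fin (n / k) → Fin k → α) → ℝ}
    (hg : ∀ β, 0 ≤ g β) :
    ∑ y : Fin n → α, g (wordBlocks k n y) ≤ Fintype.card α ^ (n % k) * ∑ β, g β := by
  classical
  calc ∑ y : Fin n → α, g (wordBlocks k n y)
      = ∑ z ∈ univ.image fun y : Fin n → α => (wordBlocks k n y, wordTail k n y), g z.1 :=
        (sum_image (f := fun z => g z.1) fun y _ y' _ h => injective_wordBlocks_wordTail h).symm
    _ ≤ ∑ z : (Fin (n / k) → Fin k → α) × (Fin (n % k) → α), g z.1 :=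
        sum_le_sum_of_subset_of_nonneg (subset_univ _) fun z _ _ => hg z.1
    _ = Fintype.card α ^ (n % k) * ∑ β, g β := by
        simp [Fintype.sum_prod_type, mul_sum, mul_comm]

lemma blk_mul_eq_wordBlocks {i : ℕ} (hi : i < n / k) (ω : ℤ → α) :
    blk (i * k) k ω = wordBlocks k n (blk 0 n ω) ⟨i, hi⟩ := by
  funext j
  simp only [blk, wordBlocks]
  congr 1
  push_cast
  ring

variable [DecidableEq α]

lemma empDist_eq_empirical (k n : ℕ) (ω : ℤ → α) :
    empDist k n ω = empirical (wordBlocks k n (blk 0 n ω)) := by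
  funext w
  simp only [empDist, empirical, count,
    ← Fin.sum_univ_eq_sum_range (fun i => if blk (i * k) k ω = w then (1 : ℝ) else 0), sum_boole]
  congr 3
  ext i
  rw [mem_filter, mem_filter, blk_mul_eq_wordBlocks i.2]

lemma Dcount_eq_distinct (k n : ℕ) (ω : ℤ → α) :
    Dcount k n ω = distinct (wordBlocks k n (blk 0 n ω)) := by
  have : {w | ∃ i < n / k, blk (i * k) k ω = w} = ↑(univ.image (wordBlocks k n (blk 0 n ω))) := by
    ext w
    simp only [Set.mem_ofPred_eq, coe_image, coe_univ, Set.image_univ, Set.mem_range]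
    exact ⟨fun ⟨i, hi, hw⟩ => ⟨⟨i, hi⟩, by rw [← hw, blk_mul_eq_wordBlocks]⟩,
      fun ⟨i, hw⟩ => ⟨i, i.2, by rw [← hw, blk_mul_eq_wordBlocks]⟩⟩
  rw [Dcount, this, Set.ncard_coe_finset, distinct]

end Words

section Code

variable {α : Type*} [Fintype α] [DecidableEq α]

noncomputable def codeLength (k n : ℕ) (y : Fin n → α) : ℝ :=
  2 * Real.logb 2 k + ((n : ℝ) / k) * (Hent (empirical (wordBlocks k n y)) + 2)
    + 3 * k * Real.logb 2 (Fintype.card α) * (distinct (wordBlocks k n y) + 1)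

lemma Kcode_eq_codeLength (k n : ℕ) (ω : ℤ → α) :
    Kcode k n ω = codeLength k n (blk 0 n ω) := by
  rw [Kcode, plugIn, empDist_eq_empirical, Dcount_eq_distinct, codeLength]

lemma mul_add_le_codeLength (k n : ℕ) (y : Fin n → α) :
    (n / k : ℕ) * (Hent (empirical (wordBlocks k n y)) + 2)
      + 3 * k * Real.logb 2 (Fintype.card α) * (distinct (wordBlocks k n y) + 1)
      ≤ codeLength k n y := by
  have hH := Hent_nonneg (empirical_nonneg (wordBlocks k n y)) (empirical_le_one _)
  have hdiv : ((n / k : ℕ) : ℝ) * (Hent (empirical (wordBlocks k n y)) + 2)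
      ≤ ((n : ℝ) / k) * (Hent (empirical (wordBlocks k n y)) + 2) := by
    gcongr
    exact Nat.cast_div_le
  have := logb_two_natCast_nonneg k
  unfold codeLength
  linarith

lemma codeLength_nonneg (k n : ℕ) (y : Fin n → α) : 0 ≤ codeLength k n y := by
  refine le_trans ?_ (mul_add_le_codeLength k n y)
  have := Hent_nonneg (empirical_nonneg (wordBlocks k n y)) (empirical_le_one _)
  have := logb_two_natCast_nonneg (Fintype.card α)
  positivity

/-- `r` is the price of each dictionary entry and `1/4` the price of each block. -/
lemma two_rpow_neg_codeLength_le (k n : ℕ) (y : Fin n → α) :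
    let r : ℝ := 2 ^ (-(3 * k * Real.logb 2 (Fintype.card α)))
    (2 : ℝ) ^ (-codeLength k n y) ≤
      r * ((2 : ℝ) ^ (-((n / k : ℕ) * Hent (empirical (wordBlocks k n y)))) *
        (r ^ distinct (wordBlocks k n y) * (1 / 4) ^ (n / k))) := by
  intro r
  set a := 3 * k * Real.logb 2 (Fintype.card α)
  set H := Hent (empirical (wordBlocks k n y))
  set D := distinct (wordBlocks k n y)
  set m := n / k
  have hsplit : -((m : ℝ) * (H + 2) + a * ((D : ℝ) + 1))
      = -a + (-(m * H) + ((-a) * D + (-2) * m)) := by ring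
  calc (2 : ℝ) ^ (-codeLength k n y) ≤ 2 ^ (-((m : ℝ) * (H + 2) + a * ((D : ℝ) + 1))) :=
        Real.rpow_le_rpow_of_exponent_le one_le_two (neg_le_neg (mul_add_le_codeLength k n y))
    _ = r * (2 ^ (-(m * H)) * (r ^ D * (1 / 4) ^ m)) := by
        rw [hsplit, Real.rpow_add two_pos, Real.rpow_add two_pos, Real.rpow_add two_pos,
          Real.rpow_mul_natCast zero_le_two, Real.rpow_mul_natCast zero_le_two]
        norm_num
        rfl

theorem sum_two_rpow_neg_codeLength_le_one {k : ℕ} (hk : 0 < k) (n : ℕ) :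
    ∑ y : Fin n → α, (2 : ℝ) ^ (-codeLength k n y) ≤ 1 := by
  rcases le_or_gt (Fintype.card α) 1 with hα | hα
  · calc ∑ y : Fin n → α, (2 : ℝ) ^ (-codeLength k n y)
        ≤ Fintype.card (Fin n → α) • (1 : ℝ) :=
          sum_le_card_nsmul _ _ _ fun y _ => Real.rpow_le_one_of_one_le_of_nonpos one_le_two
            (neg_nonpos.mpr (codeLength_nonneg k n y))
      _ ≤ 1 := by
          rw [nsmul_eq_mul, mul_one, Fintype.card_fun, Fintype.card_fin]
          exact_mod_cast pow_le_one₀ (Nat.zero_le _) hα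
  set t := Fintype.card α ^ k with ht
  set r : ℝ := ((t : ℝ) ^ 3)⁻¹ with hr
  have hr2 : (2 : ℝ) ^ (-(3 * k * Real.logb 2 (Fintype.card α))) = r := by
    rw [show -(3 * k * Real.logb 2 (Fintype.card α))
        = Real.logb 2 (Fintype.card α) * -((3 * k : ℕ) : ℝ) by push_cast; ring,
      Real.rpow_mul zero_le_two, Real.rpow_logb two_pos (by norm_num) (by positivity),
      Real.rpow_neg (by positivity), Real.rpow_natCast, hr, ht]
    push_cast
    ring
  have hr0 : 0 ≤ r := by positivity
  have hcard : Fintype.card (Fin k → α) = t := by rw [Fintype.card_fun, Fintype.card_fin]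
  have htail : (Fintype.card α : ℝ) ^ (n % k) ≤ t := by
    rw [ht, Nat.cast_pow]
    exact pow_le_pow_right₀ (by exact_mod_cast hα.le) (Nat.mod_lt n hk).le
  calc ∑ y : Fin n → α, (2 : ℝ) ^ (-codeLength k n y)
      ≤ ∑ y : Fin n → α, r * ((2 : ℝ) ^ (-((n / k : ℕ) * Hent (empirical (wordBlocks k n y)))) *
          (r ^ distinct (wordBlocks k n y) * (1 / 4) ^ (n / k))) :=
        sum_le_sum fun y _ => hr2 ▸ two_rpow_neg_codeLength_le k n y
    _ ≤ r * ((Fintype.card α : ℝ) ^ (n % k) * (1 + r / 3) ^ Fintype.card (Fin k → α)) := by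
        rw [← mul_sum]
        gcongr
        refine (sum_comp_wordBlocks_le (g := fun β => (2 : ℝ) ^ (-((n / k : ℕ) *
          Hent (empirical β))) * (r ^ distinct β * (1 / 4) ^ (n / k))) fun β => ?_).trans ?_
        · exact mul_nonneg (Real.rpow_nonneg zero_le_two _) (by positivity)
        gcongr
        exact sum_rpow_neg_mul_Hent_mul_pow_distinct_le hr0
    _ ≤ r * (t * (1 + r / 3) ^ t) := by rw [hcard]; gcongr
    _ ≤ 1 := inv_pow_three_mul_mul_one_add_pow_le_one (Nat.one_lt_pow hk.ne' hα)

end Code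

end BlockCode

open BlockCode

theorem expected_Kcode_ge_blockEntropy_general
    {μ : Measure (ℤ → 𝕏)} [IsProbabilityMeasure μ]
    (k n : ℕ) (hk : 0 < k) :
    Hblock μ n ≤ ∫ ω, Kcode k n ω ∂μ := by
  have hblk : Measurable (blk 0 n : (ℤ → 𝕏) → Fin n → 𝕏) :=
    measurable_pi_lambda _ fun i => measurable_pi_apply _
  have hpblock (y : Fin n → 𝕏) : pblock μ n y = μ.real (blk 0 n ⁻¹' {y}) := rfl
  have hsum : ∑ y, pblock μ n y = 1 := by
    simp only [hpblock]
    rw [sum_measureReal_preimage_singleton _ fun y _ => hblk (measurableSet_singleton y)]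
    simp
  have hint : ∫ ω, Kcode k n ω ∂μ = ∑ y, pblock μ n y * codeLength k n y := by
    simp only [Kcode_eq_codeLength, hpblock]
    exact integral_comp_eq_sum_measureReal_preimage hblk _
  rw [Hblock, hint]
  exact Hent_le_sum_mul_of_kraft (fun y => measureReal_nonneg) hsum
    (sum_two_rpow_neg_codeLength_le_one hk n)

/-- Source coding inequality for the modified `k`-block code: for a stationary
process over a finite alphabet and positive integers `k ≤ n`,
`E[K(k, X_1^n)] ≥ H(X_1^n)`. -/
theorem expected_Kcode_ge_blockEntropy
    {μ : Measure (ℤ → 𝕏)} [IsProbabilityMeasure μ]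
    (hstat : MeasurePreserving shift μ μ)
    (k n : ℕ) (hk : 0 < k) (hkn : k ≤ n) :
    Hblock μ n ≤ ∫ ω, Kcode k n ω ∂μ :=
  expected_Kcode_ge_blockEntropy_general k n hk
end

section
/- For every stationary process (X_i)_{i∈ℤ} over a finite alphabet 𝕏, all positive integers p and k with n = pk, the expected number of distinct nonoverlapping k-blocks satisfies (k/n) E[D(k, X_1^n)] ≤ E[σ(−log₂ P(X_1^k = w | ℐ)|_{w = X_1^k} − log₂(n/k))], where σ(y) = min(2^y, 1). -/
open MeasureTheory Filter Real

variable {𝕏 : Type*} [Fintype 𝕏] [Nonempty 𝕏] [DecidableEq 𝕏]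
  [MeasurableSpace 𝕏] [MeasurableSingletonClass 𝕏]

/-!
Write `q_w = P(X_1^k = w | ℐ)` and `p = n/k`. A block value `w` is counted by `D` iff it occurs
among the `p` blocks, and by stationarity each of those blocks has the same conditional law
`q_w` given `ℐ`; so the union bound, taken conditionally on `ℐ`, gives
`P(w is counted) ≤ E[min(1, p q_w)]`. On the other side, `q_w` is `ℐ`-measurable, so conditioning
on `ℐ` turns `E[1{X_1^k = w} σ(-log₂ q_w - log₂ p)]` into `E[q_w σ(-log₂ q_w - log₂ p)]`,
which is `E[min(1/p, q_w)]`. Summing over `w` gives the inequality.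
-/

section Invariants

variable {α : Type*} [MeasurableSpace α] {μ : Measure α} [IsFiniteMeasure μ] {T : α → α}

theorem condExp_comp_ae_eq_of_measurePreserving (hT : MeasurePreserving T μ μ) {f : α → ℝ}
    (hf : Integrable f μ) :
    μ[f ∘ T | MeasurableSpace.invariants T] =ᵐ[μ] μ[f | MeasurableSpace.invariants T] := by
  have hm := MeasurableSpace.invariants_le T
  refine (ae_eq_condExp_of_forall_setIntegral_eq hm (hT.integrable_comp_of_integrable hf)
    (fun s _ _ => integrable_condExp.integrableOn) (fun s hs _ => ?_)
    stronglyMeasurable_condExp.aestronglyMeasurable).symm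
  rw [setIntegral_condExp hm hf hs]
  -- `s` is invariant, so `T ⁻¹' s = s` and the change of variables stays on `s`
  have h := setIntegral_map (hm s hs) (hT.map_eq.symm ▸ hf.aestronglyMeasurable)
    hT.measurable.aemeasurable
  rwa [hT.map_eq, hs.2] at h

theorem condExp_comp_iterate_ae_eq_of_measurePreserving (hT : MeasurePreserving T μ μ)
    {f : α → ℝ} (hf : Integrable f μ) (s : ℕ) :
    μ[f ∘ T^[s] | MeasurableSpace.invariants T] =ᵐ[μ] μ[f | MeasurableSpace.invariants T] := by
  induction s with
  | zero => rfl
  | succ s ih =>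
    rw [Function.iterate_succ, ← Function.comp_assoc]
    exact (condExp_comp_ae_eq_of_measurePreserving hT
      ((hT.iterate s).integrable_comp_of_integrable hf)).trans ih

end Invariants

section CondExp

variable {α : Type*} {m m₀ : MeasurableSpace α} {μ : Measure α}

theorem integral_mul_condExp [IsFiniteMeasure μ] (hm : m ≤ m₀) {f g : α → ℝ}
    (hg : StronglyMeasurable[m] g) (hgf : Integrable (g * f) μ) (hf : Integrable f μ) :
    ∫ x, g x * f x ∂μ = ∫ x, g x * (μ[f | m]) x ∂μ := by
  rw [← integral_condExp hm]
  exact integral_congr_ae (condExp_mul_of_stronglyMeasurable_left hg hgf hf)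

theorem measureReal_biUnion_le_integral_min_condExp [IsFiniteMeasure μ] (hm : m ≤ m₀)
    {ι : Type*} (s : Finset ι) {A : ι → Set α} (hA : ∀ i ∈ s, MeasurableSet (A i)) :
    μ.real (⋃ i ∈ s, A i) ≤
      ∫ x, min 1 (∑ i ∈ s, (μ[(A i).indicator (fun _ => (1 : ℝ)) | m]) x) ∂μ := by
  set U := ⋃ i ∈ s, A i
  have hU : MeasurableSet U := Finset.measurableSet_biUnion s hA
  have hint : ∀ i ∈ s, Integrable ((A i).indicator fun _ => (1 : ℝ)) μ :=
    fun i hi => (integrable_const 1).indicator (hA i hi)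
  have hUint : Integrable (U.indicator fun _ => (1 : ℝ)) μ := (integrable_const 1).indicator hU
  have hle_one : μ[U.indicator (fun _ => (1 : ℝ)) | m] ≤ᵐ[μ] fun _ => 1 := by
    have h := condExp_mono (m := m) hUint (integrable_const 1)
      (.of_forall fun x => Set.indicator_le_self' (fun _ _ => zero_le_one) x)
    rwa [condExp_const hm] at h
  have hpt : ∀ x, U.indicator (fun _ => (1 : ℝ)) x
      ≤ ∑ i ∈ s, (A i).indicator (fun _ => (1 : ℝ)) x := by
    intro x
    have hnonneg : ∀ i ∈ s, 0 ≤ (A i).indicator (fun _ => (1 : ℝ)) x :=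
      fun i _ => Set.indicator_nonneg (fun _ _ => zero_le_one) x
    by_cases hx : x ∈ U
    · obtain ⟨i, hi, hxi⟩ := Set.mem_iUnion₂.1 hx
      rw [Set.indicator_of_mem hx]
      exact (Set.indicator_of_mem hxi (fun _ => (1 : ℝ))).ge.trans
        (Finset.single_le_sum hnonneg hi)
    · rw [Set.indicator_of_notMem hx]
      exact Finset.sum_nonneg hnonneg
  have hle_sum : μ[U.indicator (fun _ => (1 : ℝ)) | m]
      ≤ᵐ[μ] ∑ i ∈ s, μ[(A i).indicator (fun _ => (1 : ℝ)) | m] :=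
    (condExp_mono hUint (integrable_finsetSum' s hint)
      (.of_forall fun x => by simpa only [Finset.sum_apply] using hpt x)).trans
      (condExp_finsetSum hint m).le
  calc μ.real U = ∫ x, (μ[U.indicator (fun _ => (1 : ℝ)) | m]) x ∂μ := by
        rw [integral_condExp hm, integral_indicator_const _ hU, smul_eq_mul, mul_one]
    _ ≤ _ := by
        refine integral_mono_ae integrable_condExp
          ((integrable_const 1).inf (integrable_finsetSum s fun i _ => integrable_condExp)) ?_
        filter_upwards [hle_one, hle_sum] with x h1 hs
        exact le_min h1 (by simpa only [Finset.sum_apply] using hs)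

end CondExp

theorem measurable_sigmaFn : Measurable sigmaFn :=
  (measurable_const.pow measurable_id).min measurable_const

theorem abs_sigmaFn_le_one (y : ℝ) : |sigmaFn y| ≤ 1 :=
  abs_le.2 ⟨(neg_nonpos.2 zero_le_one).trans (le_min (by positivity) zero_le_one),
    min_le_right _ _⟩

theorem mul_sigmaFn_neg_logb_sub_logb {P q : ℝ} (hP : 0 < P) (hq : 0 ≤ q) :
    q * sigmaFn (-logb 2 q - logb 2 P) = min P⁻¹ q := by
  rcases hq.eq_or_lt with rfl | hq
  · simp [inv_nonneg.2 hP.le]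
  have h2 : (2 : ℝ) ^ (-logb 2 q - logb 2 P) = (q * P)⁻¹ := by
    rw [sub_eq_add_neg, rpow_add two_pos, rpow_neg zero_le_two, rpow_neg zero_le_two,
      rpow_logb two_pos (by norm_num) hq, rpow_logb two_pos (by norm_num) hP, mul_inv]
  rw [sigmaFn, h2, mul_min_of_nonneg _ _ hq.le, mul_one, mul_inv, ← mul_assoc,
    mul_inv_cancel₀ hq.ne', one_mul]

section Blocks

variable {A : Type*}

theorem shift_iterate_apply (s : ℕ) (ω : ℤ → A) (j : ℤ) : shift^[s] ω j = ω (j + s) := by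
  induction s generalizing ω with
  | zero => simp
  | succ s ih =>
    rw [Function.iterate_succ_apply, ih, shift]
    push_cast
    ring_nf

theorem blk_zero_shift_iterate (s k : ℕ) (ω : ℤ → A) : blk 0 k (shift^[s] ω) = blk s k ω := by
  funext j
  simp only [blk, shift_iterate_apply]
  push_cast
  ring_nf

def occursAmongBlocks (p k : ℕ) (w : Fin k → A) : Set (ℤ → A) :=
  ⋃ i ∈ Finset.range p, {ω | blk (i * k) k ω = w}

theorem Dcount_mul_eq_sum_indicator [Fintype A] {k : ℕ} (p : ℕ) (hk : 0 < k) (ω : ℤ → A) :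
    (Dcount k (p * k) ω : ℝ) = ∑ w, (occursAmongBlocks p k w).indicator (fun _ => 1) ω := by
  classical
  rw [Dcount, Nat.mul_div_cancel _ hk, Set.ncard_eq_toFinset_card', Set.toFinset_ofPred,
    Finset.card_filter]
  push_cast
  refine Finset.sum_congr rfl fun w _ => ?_
  simp [occursAmongBlocks, Set.indicator_apply]

variable [MeasurableSpace A]

theorem measurable_blk (s k : ℕ) : Measurable (blk (𝕏 := A) s k) :=
  measurable_pi_lambda _ fun _ => measurable_pi_apply _

theorem measurableSet_blk_eq [MeasurableSingletonClass A] (s k : ℕ) (w : Fin k → A) :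
    MeasurableSet {ω | blk s k ω = w} :=
  measurable_blk s k (measurableSet_singleton w)

theorem measurableSet_occursAmongBlocks [MeasurableSingletonClass A] (p k : ℕ)
    (w : Fin k → A) : MeasurableSet (occursAmongBlocks p k w) :=
  Finset.measurableSet_biUnion _ fun _ _ => measurableSet_blk_eq _ _ w

theorem condP_nonneg {μ : Measure (ℤ → A)} (k : ℕ) (w : Fin k → A) : 0 ≤ᵐ[μ] condP μ k w :=
  condExp_nonneg (.of_forall fun _ => Set.indicator_nonneg (fun _ _ => zero_le_one) _)

variable {μ : Measure (ℤ → A)} [IsFiniteMeasure μ]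

theorem condExp_indicator_blk_ae_eq_condP [MeasurableSingletonClass A]
    (hstat : MeasurePreserving shift μ μ) (s k : ℕ) (w : Fin k → A) :
    μ[{ω | blk s k ω = w}.indicator (fun _ => (1 : ℝ)) | MeasurableSpace.invariants shift]
      =ᵐ[μ] condP μ k w := by
  have hcomp : {ω | blk s k ω = w}.indicator (fun _ => (1 : ℝ))
      = {ω | blk 0 k ω = w}.indicator (fun _ => (1 : ℝ)) ∘ shift^[s] := by
    have hpre : {ω | blk s k ω = w} = shift^[s] ⁻¹' {ω | blk 0 k ω = w} := by
      ext ω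
      simp only [Set.mem_preimage, Set.mem_ofPred_eq, blk_zero_shift_iterate]
    funext ω
    rw [hpre]
    exact Set.indicator_comp_right _ (g := fun _ => (1 : ℝ))
  rw [hcomp]
  exact condExp_comp_iterate_ae_eq_of_measurePreserving hstat
    ((integrable_const 1).indicator (measurableSet_blk_eq 0 k w)) s

theorem measureReal_occursAmongBlocks_le [MeasurableSingletonClass A]
    (hstat : MeasurePreserving shift μ μ) (p k : ℕ) (w : Fin k → A) :
    μ.real (occursAmongBlocks p k w) ≤ ∫ ω, min 1 (p * condP μ k w ω) ∂μ := by
  refine (measureReal_biUnion_le_integral_min_condExp (MeasurableSpace.invariants_le shift) _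
    fun i _ => measurableSet_blk_eq _ _ w).trans_eq (integral_congr_ae ?_)
  filter_upwards [(eventually_all_finset (Finset.range p)).2
    fun i _ => condExp_indicator_blk_ae_eq_condP hstat (i * k) k w] with ω hω
  rw [Finset.sum_congr rfl hω, Finset.sum_const, Finset.card_range, nsmul_eq_mul]

theorem integral_Dcount_le [Fintype A] [MeasurableSingletonClass A]
    (hstat : MeasurePreserving shift μ μ) (p : ℕ) {k : ℕ} (hk : 0 < k) :
    ∫ ω, (Dcount k (p * k) ω : ℝ) ∂μ ≤ ∑ w, ∫ ω, min 1 (p * condP μ k w ω) ∂μ := by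
  simp_rw [Dcount_mul_eq_sum_indicator p hk]
  rw [integral_finsetSum _ fun w _ =>
    (integrable_const 1).indicator (measurableSet_occursAmongBlocks p k w)]
  refine Finset.sum_le_sum fun w _ => ?_
  rw [integral_indicator_const _ (measurableSet_occursAmongBlocks p k w), smul_eq_mul, mul_one]
  exact measureReal_occursAmongBlocks_le hstat p k w

theorem integral_sigmaFn_condP [Fintype A] [MeasurableSingletonClass A] {P : ℝ} (hP : 0 < P)
    (k : ℕ) :
    ∫ ω, sigmaFn (-logb 2 (condP μ k (blk 0 k ω) ω) - logb 2 P) ∂μ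
      = ∑ w, ∫ ω, min P⁻¹ (condP μ k w ω) ∂μ := by
  classical
  set g : (Fin k → A) → (ℤ → A) → ℝ := fun w ω => sigmaFn (-logb 2 (condP μ k w ω) - logb 2 P)
  set f : (Fin k → A) → (ℤ → A) → ℝ := fun w => {ω | blk 0 k ω = w}.indicator fun _ => 1
  have hg : ∀ w, StronglyMeasurable[MeasurableSpace.invariants shift] (g w) := fun w =>
    (measurable_sigmaFn.comp (((Real.measurable_log.div_const _).comp
      stronglyMeasurable_condExp.measurable).neg.sub_const _)).stronglyMeasurable
  have hf : ∀ w, Integrable (f w) μ :=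
    fun w => (integrable_const 1).indicator (measurableSet_blk_eq 0 k w)
  have hgf : ∀ w, Integrable (fun ω => g w ω * f w ω) μ := fun w =>
    (hf w).bdd_mul ((hg w).mono (MeasurableSpace.invariants_le shift)).aestronglyMeasurable
      (.of_forall fun _ => abs_sigmaFn_le_one _)
  have hsplit : ∀ ω, sigmaFn (-logb 2 (condP μ k (blk 0 k ω) ω) - logb 2 P)
      = ∑ w, g w ω * f w ω := by
    intro ω
    simp only [f, g, Set.indicator_apply, Set.mem_ofPred_eq, mul_ite, mul_one, mul_zero,
      Finset.sum_ite_eq, Finset.mem_univ, if_true]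
  simp_rw [hsplit]
  rw [integral_finsetSum _ fun w _ => hgf w]
  refine Finset.sum_congr rfl fun w _ => ?_
  rw [integral_mul_condExp (MeasurableSpace.invariants_le shift) (hg w) (hgf w) (hf w)]
  refine integral_congr_ae ?_
  filter_upwards [condP_nonneg k w] with ω hω
  rw [mul_comm]
  exact mul_sigmaFn_neg_logb_sub_logb hP hω

end Blocks

/-- For a stationary process over a finite alphabet, positive integers `p`, `k`
and `n = pk`, the expected number of distinct nonoverlapping `k`-blocks
satisfies `(k/n) E[D(k,X_1^n)] ≤ E[σ(−log₂ P(X_1^k = w | ℐ)|_{w=X_1^k} − log₂(n/k))]`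
where `σ(y) = min(2^y, 1)`. -/
theorem expected_Dcount_le_sigma
    {μ : Measure (ℤ → 𝕏)} [IsProbabilityMeasure μ]
    (hstat : MeasurePreserving shift μ μ)
    (p k n : ℕ) (hp : 0 < p) (hk : 0 < k) (hn : n = p * k) :
    ((k : ℝ) / n) * ∫ ω, (Dcount k n ω : ℝ) ∂μ ≤
      ∫ ω, sigmaFn (-Real.logb 2 (condP μ k (blk 0 k ω) ω)
        - Real.logb 2 ((n : ℝ) / k)) ∂μ := by
  subst hn
  have hP : (0 : ℝ) < p := by exact_mod_cast hp
  have hk' : (k : ℝ) ≠ 0 := by exact_mod_cast hk.ne'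
  have hnk : ((p * k : ℕ) : ℝ) / k = p := by push_cast; field_simp
  have hkn : (k : ℝ) / (p * k : ℕ) = (p : ℝ)⁻¹ := by push_cast; field_simp
  rw [hnk, hkn, integral_sigmaFn_condP hP]
  calc (p : ℝ)⁻¹ * ∫ ω, (Dcount k (p * k) ω : ℝ) ∂μ
      ≤ (p : ℝ)⁻¹ * ∑ w, ∫ ω, min 1 (p * condP μ k w ω) ∂μ := by
        gcongr
        exact integral_Dcount_le hstat p hk
    _ = ∑ w, ∫ ω, min (p : ℝ)⁻¹ (condP μ k w ω) ∂μ := by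
        rw [Finset.mul_sum]
        refine Finset.sum_congr rfl fun w _ => ?_
        rw [← integral_const_mul]
        congr 1 with ω
        rw [mul_min_of_nonneg _ _ (inv_nonneg.2 hP.le), mul_one, inv_mul_cancel_left₀ hP.ne']
end

section
/- Let (X_i)_{i∈ℤ} be a stationary ergodic process over a finite alphabet 𝕏 with entropy rate h, let k ≤ n be positive integers, and let η > 0. Then η · P(H(k, X_1^n)/k − h > η) ≤ (H(k)/k − h) + E[(H(k, X_1^n)/k − K(k, X_1^n)/n)^−] + E[((K(k, X_1^n) + log₂ P(X_1^n = w)|_{w=X_1^n})/n)^−] + E[((−log₂ P(X_1^n = w)|_{w=X_1^n})/n − h)^−], where x^− = −x·1[x<0]. -/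
/-!
Pointwise, `η · 1[x > η] ≤ x + x⁻`, and the negative part is subadditive; writing
`H(k, X_1^n)/k − h` as the sum of the three differences inside the negative parts and taking
expectations reduces the bound to `E[H(k, X_1^n)] ≤ H(k)`. By stationarity every nonoverlapping
block has law `p_k`, so the empirical block distribution has mean `p_k`, and the inequality is
Jensen's inequality for the concave function `x ↦ −x log x`. All integrands depend only on
`X_1^n`, which takes finitely many values, so they are measurable and bounded.
-/

open MeasureTheory Filter Real

variable {𝕏 : Type*} [Fintype 𝕏] [Nonempty 𝕏] [DecidableEq 𝕏]
  [MeasurableSpace 𝕏] [MeasurableSingletonClass 𝕏]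

open Function

theorem Function.FactorsThrough.measurable {α β γ : Type*} [MeasurableSpace α] [MeasurableSpace β]
    [MeasurableSpace γ] [Countable β] [MeasurableSingletonClass β] {f : α → β} {g : α → γ}
    (hg : g.FactorsThrough f) (hf : Measurable f) : Measurable g := by
  intro s _
  have hpre : g ⁻¹' s = f ⁻¹' (f '' (g ⁻¹' s)) := by
    ext a
    exact ⟨fun ha => ⟨a, ha, rfl⟩, fun ⟨b, hb, hba⟩ => (hg hba ▸ hb : g a ∈ s)⟩
  rw [hpre]
  exact hf (Set.to_countable _).measurableSet

theorem Function.FactorsThrough.integrable {α β E : Type*} [MeasurableSpace α] [MeasurableSpace β]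
    [Finite β] [MeasurableSingletonClass β] [NormedAddCommGroup E] {μ : Measure α}
    [IsFiniteMeasure μ] {f : α → β} {g : α → E} (hg : g.FactorsThrough f) (hf : Measurable f) :
    Integrable g μ := by
  rw [← hg.extend_comp (0 : β → E)]
  exact Integrable.of_finite.comp_measurable hf

theorem Nat.mul_add_le_of_lt_div {i k n : ℕ} (hi : i < n / k) : i * k + k ≤ n := by
  simpa [add_one_mul] using Nat.mul_le_of_le_div k (i + 1) n hi

section Blocks

variable {α : Type*}

theorem iterate_shift_apply (s : ℕ) (ω : ℤ → α) (i : ℤ) : shift^[s] ω i = ω (i + s) := by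
  induction s generalizing i with
  | zero => simp
  | succ m ih =>
    rw [iterate_succ_apply', shift, ih]
    congr 1
    push_cast
    ring

theorem blk_zero_iterate_shift (s l : ℕ) (ω : ℤ → α) : blk 0 l (shift^[s] ω) = blk s l ω := by
  funext j
  simp only [blk, iterate_shift_apply]
  congr 1
  push_cast
  ring

theorem measurable_blk_s19 [MeasurableSpace α] (s l : ℕ) : Measurable (blk (𝕏 := α) s l) :=
  measurable_pi_iff.2 fun _ => measurable_pi_apply _

theorem blk_factorsThrough_blk_zero {s l n : ℕ} (h : s + l ≤ n) :
    (blk (𝕏 := α) s l).FactorsThrough (blk 0 n) := by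
  intro ω ω' hωω'
  funext j
  have := congrFun hωω' ⟨s + j, by omega⟩
  simp only [blk] at this ⊢
  push_cast at this
  simpa [add_comm, add_left_comm, add_assoc] using this

theorem empDist_factorsThrough [DecidableEq α] (k n : ℕ) :
    (empDist (𝕏 := α) k n).FactorsThrough (blk 0 n) := by
  intro ω ω' hωω'
  funext w
  refine congrArg (· / _) (Finset.sum_congr rfl fun i hi => ?_)
  rw [blk_factorsThrough_blk_zero (Nat.mul_add_le_of_lt_div (Finset.mem_range.1 hi)) hωω']

theorem plugIn_factorsThrough [Fintype α] [DecidableEq α] (k n : ℕ) :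
    (plugIn (𝕏 := α) k n).FactorsThrough (blk 0 n) := fun _ _ h => by
  rw [plugIn, plugIn, empDist_factorsThrough k n h]

theorem Dcount_factorsThrough (k n : ℕ) : (Dcount (𝕏 := α) k n).FactorsThrough (blk 0 n) := by
  intro ω ω' hωω'
  unfold Dcount
  congr 1
  ext w
  refine exists_congr fun i => and_congr_right fun hi => ?_
  rw [blk_factorsThrough_blk_zero (Nat.mul_add_le_of_lt_div hi) hωω']

theorem Kcode_factorsThrough [Fintype α] [DecidableEq α] (k n : ℕ) :
    (Kcode (𝕏 := α) k n).FactorsThrough (blk 0 n) := fun _ _ h => by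
  rw [Kcode, Kcode, plugIn_factorsThrough k n h, Dcount_factorsThrough k n h]

end Blocks

section Stationarity

variable {α : Type*} [MeasurableSpace α] [MeasurableSingletonClass α] {μ : Measure (ℤ → α)}

theorem MeasureTheory.MeasurePreserving.measure_blk_eq (hμ : MeasurePreserving shift μ μ) (s k : ℕ)
    (w : Fin k → α) : μ {ω | blk s k ω = w} = μ {ω | blk 0 k ω = w} := by
  have hpre : {ω | blk s k ω = w} = shift^[s] ⁻¹' {ω | blk 0 k ω = w} := by
    ext ω
    simp [blk_zero_iterate_shift]
  rw [hpre]
  exact (hμ.iterate s).measure_preimage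
    (measurable_blk_s19 0 k (measurableSet_singleton w)).nullMeasurableSet

theorem MeasureTheory.MeasurePreserving.integral_empDist [DecidableEq α] [IsProbabilityMeasure μ]
    (hμ : MeasurePreserving shift μ μ) {k n : ℕ} (hnk : 0 < n / k) (w : Fin k → α) :
    ∫ ω, empDist k n ω w ∂μ = pblock μ k w := by
  have hind : ∀ i, (fun ω => if blk (i * k) k ω = w then (1 : ℝ) else 0)
      = {ω | blk (i * k) k ω = w}.indicator 1 := fun i => by
    ext ω
    simp [Set.indicator_apply]
  have hmeas : ∀ i, MeasurableSet {ω : ℤ → α | blk (i * k) k ω = w} := fun i =>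
    measurable_blk_s19 (i * k) k (measurableSet_singleton w)
  have hint : ∀ i ∈ Finset.range (n / k),
      Integrable (fun ω => if blk (i * k) k ω = w then (1 : ℝ) else 0) μ := fun i _ => by
    rw [hind]
    exact (integrable_const 1).indicator (hmeas i)
  have hblock : ∀ i ∈ Finset.range (n / k),
      ∫ ω, (if blk (i * k) k ω = w then (1 : ℝ) else 0) ∂μ = pblock μ k w := fun i _ => by
    rw [hind, integral_indicator_one (hmeas i), measureReal_def, hμ.measure_blk_eq, pblock]
  have hnk' : ((n / k : ℕ) : ℝ) ≠ 0 := by exact_mod_cast hnk.ne'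
  simp only [empDist]
  rw [integral_div, integral_finsetSum _ hint, Finset.sum_congr rfl hblock, Finset.sum_const,
    Finset.card_range, nsmul_eq_mul, mul_div_cancel_left₀ _ hnk']

end Stationarity

theorem Hent_eq_sum_negMulLog_div {A : Type*} [Fintype A] (p : A → ℝ) :
    Hent p = (∑ w, negMulLog (p w)) / log 2 := by
  simp only [Hent, negMulLog, logb, Finset.sum_div, ← Finset.sum_neg_distrib]
  exact Finset.sum_congr rfl fun w _ => by ring

theorem integral_Hent_le_Hent_integral {Ω A : Type*} [MeasurableSpace Ω] [Fintype A]
    {μ : Measure Ω} [IsProbabilityMeasure μ] {q : Ω → A → ℝ} (hq : ∀ ω w, 0 ≤ q ω w)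
    (hq_int : ∀ w, Integrable (q · w) μ) (hH_int : ∀ w, Integrable (fun ω => negMulLog (q ω w)) μ) :
    ∫ ω, Hent (q ω) ∂μ ≤ Hent (fun w => ∫ ω, q ω w ∂μ) := by
  simp only [Hent_eq_sum_negMulLog_div]
  rw [integral_div, integral_finsetSum _ fun w _ => hH_int w]
  gcongr with w
  exact concaveOn_negMulLog.le_map_integral continuous_negMulLog.continuousOn isClosed_Ici
    (Eventually.of_forall fun ω => hq ω w) (hq_int w) (hH_int w)

theorem MeasureTheory.MeasurePreserving.integral_plugIn_le_Hblock {α : Type*} [Fintype α]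
    [DecidableEq α] [MeasurableSpace α] [MeasurableSingletonClass α] {μ : Measure (ℤ → α)}
    [IsProbabilityMeasure μ] (hμ : MeasurePreserving shift μ μ) {k n : ℕ} (hk : 0 < k)
    (hkn : k ≤ n) : ∫ ω, plugIn k n ω ∂μ ≤ Hblock μ k := by
  have hemp : ∀ w : Fin k → α, (empDist k n · w).FactorsThrough (blk 0 n) :=
    fun w _ _ h => congrFun (empDist_factorsThrough k n h) w
  have hnonneg : ∀ ω (w : Fin k → α), 0 ≤ empDist k n ω w := fun ω w => by
    unfold empDist
    exact div_nonneg (Finset.sum_nonneg fun _ _ => by positivity) (Nat.cast_nonneg _)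
  calc ∫ ω, plugIn k n ω ∂μ ≤ Hent (fun w => ∫ ω, empDist k n ω w ∂μ) :=
        integral_Hent_le_Hent_integral hnonneg (fun w => (hemp w).integrable (measurable_blk_s19 0 n))
          fun w => ((hemp w).comp_left negMulLog).integrable (measurable_blk_s19 0 n)
    _ = Hblock μ k := by
        simp only [hμ.integral_empDist (Nat.div_pos hkn hk), Hblock]

theorem nPart_eq_max_neg_zero (x : ℝ) : nPart x = max (-x) 0 := by
  unfold nPart
  split_ifs
  · exact (max_eq_left (by linarith)).symm
  · exact (max_eq_right (by linarith)).symm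

theorem MeasureTheory.Integrable.nPart {Ω : Type*} [MeasurableSpace Ω] {μ : Measure Ω}
    {g : Ω → ℝ} (hg : Integrable g μ) : Integrable (fun ω => nPart (g ω)) μ := by
  simpa only [nPart_eq_max_neg_zero, Pi.neg_apply] using hg.neg.pos_part

theorem nPart_add_le (x y : ℝ) : nPart (x + y) ≤ nPart x + nPart y := by
  unfold nPart
  split_ifs <;> linarith

theorem nPart_add_add_le (x y z : ℝ) : nPart (x + y + z) ≤ nPart x + nPart y + nPart z :=
  (nPart_add_le _ _).trans (add_le_add_left (nPart_add_le _ _) _)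

theorem mul_measureReal_lt_le_integral_add_integral_nPart {Ω : Type*} [MeasurableSpace Ω]
    {μ : Measure Ω} [IsFiniteMeasure μ] {f : Ω → ℝ} (hfm : Measurable f) (hf : Integrable f μ)
    (η : ℝ) : η * μ.real {ω | η < f ω} ≤ ∫ ω, f ω ∂μ + ∫ ω, nPart (f ω) ∂μ := by
  have hset : MeasurableSet {ω | η < f ω} := measurableSet_lt measurable_const hfm
  have hpoint : ∀ ω, {ω | η < f ω}.indicator (fun _ => η) ω ≤ f ω + nPart (f ω) := fun ω => by
    rw [nPart_eq_max_neg_zero, Set.indicator_apply]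
    split_ifs with hω
    · exact le_add_of_le_of_nonneg (le_of_lt hω) (le_max_right _ _)
    · linarith [le_max_left (-f ω) 0]
  calc η * μ.real {ω | η < f ω} = ∫ ω, {ω | η < f ω}.indicator (fun _ => η) ω ∂μ := by
        rw [integral_indicator_const η hset, smul_eq_mul, mul_comm]
    _ ≤ ∫ ω, (f ω + nPart (f ω)) ∂μ :=
        integral_mono ((integrable_const η).indicator hset) (hf.add hf.nPart) hpoint
    _ = ∫ ω, f ω ∂μ + ∫ ω, nPart (f ω) ∂μ := integral_add hf hf.nPart

theorem mul_measureReal_lt_le_integral_add_integral_nPart_of_eq_add_add {Ω : Type*}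
    [MeasurableSpace Ω] {μ : Measure Ω} [IsFiniteMeasure μ] {f a b c : Ω → ℝ} (hfm : Measurable f)
    (ha : Integrable a μ) (hb : Integrable b μ) (hc : Integrable c μ)
    (habc : ∀ ω, f ω = a ω + b ω + c ω) (η : ℝ) :
    η * μ.real {ω | η < f ω} ≤ ∫ ω, f ω ∂μ + ∫ ω, nPart (a ω) ∂μ + ∫ ω, nPart (b ω) ∂μ
      + ∫ ω, nPart (c ω) ∂μ := by
  have hf : Integrable f μ :=
    ((ha.add hb).add hc).congr (Eventually.of_forall fun ω => (habc ω).symm)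
  have hab : Integrable (fun ω => nPart (a ω) + nPart (b ω)) μ := ha.nPart.add hb.nPart
  have hsplit : ∫ ω, nPart (f ω) ∂μ
      ≤ ∫ ω, nPart (a ω) ∂μ + ∫ ω, nPart (b ω) ∂μ + ∫ ω, nPart (c ω) ∂μ := calc
    _ ≤ ∫ ω, (nPart (a ω) + nPart (b ω) + nPart (c ω)) ∂μ :=
      integral_mono hf.nPart (hab.add hc.nPart)
        fun ω => (congrArg nPart (habc ω)).trans_le (nPart_add_add_le _ _ _)
    _ = _ := by rw [integral_add hab hc.nPart, integral_add ha.nPart hb.nPart]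
  linarith [mul_measureReal_lt_le_integral_add_integral_nPart hfm hf η]

theorem deviation_probability_four_term_bound_general
    {μ : Measure (ℤ → 𝕏)} [IsProbabilityMeasure μ]
    (herg : Ergodic shift μ) (h : ℝ)
    (k n : ℕ) (hk : 0 < k) (hkn : k ≤ n) (η : ℝ) :
    η * (μ {ω | plugIn k n ω / k - h > η}).toReal ≤
      (Hblock μ k / k - h)
        + (∫ ω, nPart (plugIn k n ω / k - Kcode k n ω / n) ∂μ)
        + (∫ ω, nPart ((Kcode k n ω + Real.logb 2 (pblock μ n (blk 0 n ω))) / n) ∂μ)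
        + ∫ ω, nPart ((-Real.logb 2 (pblock μ n (blk 0 n ω))) / n - h) ∂μ := by
  have hblk := measurable_blk_s19 (α := 𝕏) 0 n
  have hP := plugIn_factorsThrough (α := 𝕏) k n
  have hK := Kcode_factorsThrough (α := 𝕏) k n
  have hmean : ∫ ω, (plugIn k n ω / k - h) ∂μ ≤ Hblock μ k / k - h := by
    rw [integral_sub ((hP.integrable hblk).div_const _) (integrable_const h), integral_div,
      integral_const, probReal_univ, one_smul]
    gcongr
    exact herg.toMeasurePreserving.integral_plugIn_le_Hblock hk hkn
  have ha : Integrable (fun ω => plugIn k n ω / k - Kcode k n ω / n) μ :=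
    FactorsThrough.integrable (fun _ _ e => by simp only [hP e, hK e]) hblk
  have hb : Integrable (fun ω => (Kcode k n ω + logb 2 (pblock μ n (blk 0 n ω))) / n) μ :=
    FactorsThrough.integrable (fun _ _ e => by simp only [hK e, e]) hblk
  have hc : Integrable (fun ω => (-logb 2 (pblock μ n (blk 0 n ω))) / n - h) μ :=
    FactorsThrough.integrable (fun _ _ e => by simp only [e]) hblk
  have hf : Measurable fun ω => plugIn k n ω / k - h := (hP.comp_left (· / k - h)).measurable hblk
  refine (mul_measureReal_lt_le_integral_add_integral_nPart_of_eq_add_add hf ha hb hc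
    (fun ω => by ring) η).trans ?_
  gcongr

/-- Four-term bound on the upper deviation probability of the plug-in
estimator: for a stationary ergodic process with entropy rate `h`, positive
integers `k ≤ n` and `η > 0`,
`η P(H(k,X_1^n)/k − h > η) ≤ (H(k)/k − h) + E[(H(k,X_1^n)/k − K(k,X_1^n)/n)⁻]
  + E[((K(k,X_1^n) + log₂ P(X_1^n = w)|_{w=X_1^n})/n)⁻]
  + E[((−log₂ P(X_1^n = w)|_{w=X_1^n})/n − h)⁻]`. -/
theorem deviation_probability_four_term_bound
    {μ : Measure (ℤ → 𝕏)} [IsProbabilityMeasure μ]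
    (herg : Ergodic shift μ) (h : ℝ)
    (hrate : Tendsto (fun k => Hblock μ k / k) atTop (nhds h))
    (k n : ℕ) (hk : 0 < k) (hkn : k ≤ n) (η : ℝ) (hη : 0 < η) :
    η * (μ {ω | plugIn k n ω / k - h > η}).toReal ≤
      (Hblock μ k / k - h)
        + (∫ ω, nPart (plugIn k n ω / k - Kcode k n ω / n) ∂μ)
        + (∫ ω, nPart ((Kcode k n ω + Real.logb 2 (pblock μ n (blk 0 n ω))) / n) ∂μ)
        + ∫ ω, nPart ((-Real.logb 2 (pblock μ n (blk 0 n ω))) / n - h) ∂μ :=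
  deviation_probability_four_term_bound_general herg h k n hk hkn η
end
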